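/- arXiv:2509.03208 — 3 statements merged into one kernel-verified Lean document; each statement's English description precedes it below -/
import Mathlib

section
/- Let d ≥ 1, Θ and σ be d×d real matrices, b ∈ ℝ^d, and let X : [0,∞) → ℝ^d be continuous with X(0) = 0. Suppose r, U : [0,∞) → ℝ^d are continuous and satisfy, for every t ≥ 0, r(t) = r(0) + ∫₀ᵗ Θ(b − r(s)) ds + σX(t) and U(t) = U(0) − ∫₀ᵗ Θ U(s) ds + σX(t). Then for every t ≥ 0, r(t) = exp(−tΘ)(r(0) − U(0) − b) + b + U(t). -/
/-!
The noise cancels in `D = r - U - b`: subtracting the two integral equations gives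
`D t = D 0 + ∫₀ᵗ (-Θ) D s ds`, so `D` solves the linear ODE `D' = -Θ D` on `[0, ∞)`.
By uniqueness of solutions (the vector field is Lipschitz), `D t = exp(-tΘ) D 0`.
-/

open Matrix intervalIntegral Set

section LinearODE

variable {E : Type*} [NormedAddCommGroup E] [NormedSpace ℝ E] [CompleteSpace E]

theorem ContinuousOn.hasDerivWithinAt_Ici_integral {f : ℝ → E} {a t : ℝ}
    (hf : ContinuousOn f (Ici a)) (ht : a ≤ t) :
    HasDerivWithinAt (fun u => ∫ s in a..u, f s) (f t) (Ici t) t :=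
  have hIoi : Ioi t ⊆ Ici a := Ioi_subset_Ici_self.trans (Ici_subset_Ici.2 ht)
  integral_hasDerivWithinAt_right
    ((hf.mono (uIcc_of_le ht ▸ Icc_subset_Ici_self)).intervalIntegrable)
    ((hf.mono hIoi).stronglyMeasurableAtFilter_nhdsWithin measurableSet_Ioi t)
    ((hf t ht).mono hIoi)

theorem hasDerivWithinAt_Ici_of_eq_add_integral {D f : ℝ → E} {a t : ℝ}
    (hf : ContinuousOn f (Ici a)) (hD : ∀ u, a ≤ u → D u = D a + ∫ s in a..u, f s)
    (ht : a ≤ t) :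
    HasDerivWithinAt D (f t) (Ici t) t :=
  ((hf.hasDerivWithinAt_Ici_integral ht).const_add (D a)).congr
    (fun u hu => hD u (ht.trans hu)) (hD t ht)

theorem hasDerivAt_exp_smul_apply (A : E →L[ℝ] E) (v : E) (t : ℝ) :
    HasDerivAt (fun u : ℝ => NormedSpace.exp (u • A) v) (A (NormedSpace.exp (t • A) v)) t := by
  simpa using (hasDerivAt_exp_smul_const' A t).clm_apply (hasDerivAt_const t v)

theorem eq_exp_smul_apply_of_hasDerivWithinAt {A : E →L[ℝ] E} {D : ℝ → E} {t : ℝ}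
    (hc : ContinuousOn D (Ici 0)) (hD : ∀ u, 0 ≤ u → HasDerivWithinAt D (A (D u)) (Ici u) u)
    (ht : 0 ≤ t) :
    D t = NormedSpace.exp (t • A) (D 0) := by
  have hexp := hasDerivAt_exp_smul_apply A (D 0)
  refine ODE_solution_unique (v := fun _ => A) (fun _ => A.lipschitz)
    (hc.mono Icc_subset_Ici_self) (fun u hu => hD u hu.1)
    (fun u _ => (hexp u).continuousAt.continuousWithinAt)
    (fun u _ => (hexp u).hasDerivWithinAt) (by simp) ⟨ht, le_rfl⟩

theorem eq_exp_smul_apply_of_eq_add_integral {A : E →L[ℝ] E} {D : ℝ → E} {t : ℝ}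
    (hc : ContinuousOn D (Ici 0)) (hD : ∀ u, 0 ≤ u → D u = D 0 + ∫ s in (0:ℝ)..u, A (D s))
    (ht : 0 ≤ t) :
    D t = NormedSpace.exp (t • A) (D 0) :=
  eq_exp_smul_apply_of_hasDerivWithinAt hc
    (fun _ => hasDerivWithinAt_Ici_of_eq_add_integral (A.continuous.comp_continuousOn hc) hD) ht

end LinearODE

section MatrixExp

variable {n : Type*} [Fintype n] [DecidableEq n]

noncomputable def Matrix.toContinuousLinearMapAlgEquiv :
    Matrix n n ℝ ≃ₐ[ℝ] ((n → ℝ) →L[ℝ] (n → ℝ)) :=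
  Matrix.toLinAlgEquiv'.trans (Module.End.toContinuousLinearMap (n → ℝ))

attribute [local instance] Matrix.linftyOpNormedAddCommGroup Matrix.linftyOpNormedRing
  Matrix.linftyOpNormedAlgebra in
theorem Matrix.exp_mulVec (M : Matrix n n ℝ) (v : n → ℝ) :
    NormedSpace.exp M *ᵥ v = NormedSpace.exp (Matrix.toContinuousLinearMapAlgEquiv M) v := by
  rw [← NormedSpace.map_exp _
    (LinearMap.continuous_of_finiteDimensional Matrix.toContinuousLinearMapAlgEquiv.toLinearMap)]
  rfl

end MatrixExp

theorem vasicek_sub_ou_eq_add_integral {d : ℕ} {Θ σ : Matrix (Fin d) (Fin d) ℝ} {b : Fin d → ℝ}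
    {X r U : ℝ → Fin d → ℝ}
    (hrcont : ContinuousOn r (Ici 0)) (hUcont : ContinuousOn U (Ici 0))
    (hr : ∀ t, 0 ≤ t → r t = r 0 + (∫ s in (0:ℝ)..t, Θ *ᵥ (b - r s)) + σ *ᵥ X t)
    (hU : ∀ t, 0 ≤ t → U t = U 0 - (∫ s in (0:ℝ)..t, Θ *ᵥ U s) + σ *ᵥ X t)
    {t : ℝ} (ht : 0 ≤ t) :
    r t - U t - b = (r 0 - U 0 - b) + ∫ s in (0:ℝ)..t, (-Θ) *ᵥ (r s - U s - b) := by
  have hint {f : ℝ → Fin d → ℝ} (hf : ContinuousOn f (Ici 0)) :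
      IntervalIntegrable (fun s => Θ *ᵥ f s) MeasureTheory.volume 0 t :=
    ((continuous_const.matrix_mulVec continuous_id).comp_continuousOn
      (hf.mono (uIcc_of_le ht ▸ Icc_subset_Ici_self))).intervalIntegrable
  have hsum : ∫ s in (0:ℝ)..t, (-Θ) *ᵥ (r s - U s - b)
      = (∫ s in (0:ℝ)..t, Θ *ᵥ (b - r s)) + ∫ s in (0:ℝ)..t, Θ *ᵥ U s := by
    rw [← integral_add (hint (f := fun s => b - r s) (continuousOn_const.sub hrcont))
      (hint hUcont)]
    congr 1 with s : 1
    rw [neg_mulVec, ← mulVec_neg, ← mulVec_add]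
    congr 1
    abel
  rw [hsum, hr t ht, hU t ht]
  abel

theorem stmt_1_general (d : ℕ) (Θ σ : Matrix (Fin d) (Fin d) ℝ) (b : Fin d → ℝ)
    (X r U : ℝ → Fin d → ℝ)
    (hrcont : ContinuousOn r (Set.Ici 0)) (hUcont : ContinuousOn U (Set.Ici 0))
    (hr : ∀ t : ℝ, 0 ≤ t →
      r t = r 0 + (∫ s in (0:ℝ)..t, Θ.mulVec (b - r s)) + σ.mulVec (X t))
    (hU : ∀ t : ℝ, 0 ≤ t →
      U t = U 0 - (∫ s in (0:ℝ)..t, Θ.mulVec (U s)) + σ.mulVec (X t)) :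
    ∀ t : ℝ, 0 ≤ t →
      r t = (NormedSpace.exp ((-t) • Θ)).mulVec (r 0 - U 0 - b) + b + U t := by
  intro t ht
  have hD := eq_exp_smul_apply_of_eq_add_integral (A := toContinuousLinearMapAlgEquiv (-Θ))
    (D := fun s => r s - U s - b) ((hrcont.sub hUcont).sub continuousOn_const)
    (fun u hu => vasicek_sub_ou_eq_add_integral hrcont hUcont hr hU hu) ht
  rw [Matrix.exp_mulVec, neg_smul, ← smul_neg, map_smul, ← hD]
  abel

/-- (Lemma 5.1 of the paper, pathwise form.) If `r` solves the generalized
Vasicek equation `r t = r 0 + ∫₀ᵗ Θ(b − r s) ds + σ X t` and `U` solves the Ornstein–Uhlenbeck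
type equation `U t = U 0 − ∫₀ᵗ Θ U s ds + σ X t` driven by the same continuous noise `X` with
`X 0 = 0`, then `r t = exp(−tΘ)(r 0 − U 0 − b) + b + U t` for all `t ≥ 0`. -/
theorem stmt_1 (d : ℕ) (hd : 1 ≤ d) (Θ σ : Matrix (Fin d) (Fin d) ℝ) (b : Fin d → ℝ)
    (X r U : ℝ → Fin d → ℝ)
    (hXcont : ContinuousOn X (Set.Ici 0)) (hX0 : X 0 = 0)
    (hrcont : ContinuousOn r (Set.Ici 0)) (hUcont : ContinuousOn U (Set.Ici 0))
    (hr : ∀ t : ℝ, 0 ≤ t →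
      r t = r 0 + (∫ s in (0:ℝ)..t, Θ.mulVec (b - r s)) + σ.mulVec (X t))
    (hU : ∀ t : ℝ, 0 ≤ t →
      U t = U 0 - (∫ s in (0:ℝ)..t, Θ.mulVec (U s)) + σ.mulVec (X t)) :
    ∀ t : ℝ, 0 ≤ t →
      r t = (NormedSpace.exp ((-t) • Θ)).mulVec (r 0 - U 0 - b) + b + U t :=
  stmt_1_general d Θ σ b X r U hrcont hUcont hr hU
end

section
/- Let d ≥ 1, Θ and σ be d×d real matrices, b, r₀ ∈ ℝ^d, and let X : [0,∞) → ℝ^d be continuous with X(0) = 0. Define r : [0,∞) → ℝ^d by r(t) = exp(−tΘ)(r₀ − b) + b + σX(t) − ∫₀ᵗ Θ exp(−(t−s)Θ) σX(s) ds. Then r is continuous, r(0) = r₀, and for every t ≥ 0, r(t) = r₀ + ∫₀ᵗ Θ(b − r(s)) ds + σX(t). -/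
/-!
Let `Y` be `σ X` extended continuously to all of `ℝ`. Then `r - b - Y` is
`h t = exp (-t • Θ) (r₀ - b - Θ ∫₀ᵗ exp (s • Θ) Y s ds)`, and the product rule gives
`h' = -Θ (h + Y) = Θ (b - r)` with `h 0 = r₀ - b`; integrating this from `0` to `t` is the equation.
-/

open Matrix intervalIntegral NormedSpace

namespace Matrix

variable {m n : Type*} [Fintype m] [Fintype n]

theorem intervalIntegral_mulVec (M : Matrix m n ℝ) {f : ℝ → n → ℝ} {a b : ℝ}
    (hf : IntervalIntegrable f MeasureTheory.volume a b) :
    ∫ s in a..b, M *ᵥ f s = M *ᵥ ∫ s in a..b, f s :=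
  (mulVecLin M).toContinuousLinearMap.intervalIntegral_comp_comm hf

theorem _root_.HasDerivAt.const_mulVec (M : Matrix m n ℝ) {w : ℝ → n → ℝ} {w' : n → ℝ} {t : ℝ}
    (hw : HasDerivAt w w' t) : HasDerivAt (fun u => M *ᵥ w u) (M *ᵥ w') t :=
  (mulVecLin M).toContinuousLinearMap.hasFDerivAt.comp_hasDerivAt t hw

variable [DecidableEq n] (Θ : Matrix n n ℝ)

-- Matrices carry no global norm; the calculus of `exp` is used under the `L∞` operator norm, whose
-- instances agree with the default ones only up to unfolding (hence `exact` rather than `simpa`).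
theorem continuous_exp_smul : Continuous fun t : ℝ => exp (t • Θ) := by
  let _ : NormedRing (Matrix n n ℝ) := Matrix.linftyOpNormedRing
  let _ : NormedAlgebra ℝ (Matrix n n ℝ) := Matrix.linftyOpNormedAlgebra
  exact (differentiable_exp_smul_const ℝ Θ).continuous

theorem hasDerivAt_exp_neg_smul_mulVec {w : ℝ → n → ℝ} {w' : n → ℝ} {t : ℝ}
    (hw : HasDerivAt w w' t) :
    HasDerivAt (fun u => exp ((-u) • Θ) *ᵥ w u)
      (-(Θ *ᵥ (exp ((-t) • Θ) *ᵥ w t)) + exp ((-t) • Θ) *ᵥ w') t := by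
  let _ : NormedRing (Matrix n n ℝ) := Matrix.linftyOpNormedRing
  let _ : NormedAlgebra ℝ (Matrix n n ℝ) := Matrix.linftyOpNormedAlgebra
  have hexp : HasDerivAt (fun u : ℝ => exp ((-u) • Θ)) (-(Θ * exp ((-t) • Θ))) t := by
    have h := (hasDerivAt_exp_smul_const' Θ (-t)).scomp t (hasDerivAt_neg t)
    simp only [Function.comp_def, neg_smul, one_smul] at h ⊢
    exact h
  let J : Matrix n n ℝ →L[ℝ] (n → ℝ) →L[ℝ] n → ℝ := (mulVecBilin ℝ ℝ).toContinuousBilinearMap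
  have h : HasDerivAt (fun u => exp ((-u) • Θ) *ᵥ w u)
      ((-(Θ * exp ((-t) • Θ))) *ᵥ w t + exp ((-t) • Θ) *ᵥ w') t :=
    (J.hasFDerivAt.comp_hasDerivAt t hexp).clm_apply hw
  rwa [neg_mulVec, ← mulVec_mulVec] at h

theorem commute_exp_smul (t : ℝ) : Commute Θ (exp (t • Θ)) :=
  ((Commute.refl Θ).smul_right t).exp_right

theorem exp_neg_smul_mulVec_exp_smul_mulVec (t : ℝ) (v : n → ℝ) :
    exp ((-t) • Θ) *ᵥ (exp (t • Θ) *ᵥ v) = v := by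
  rw [mulVec_mulVec, ← exp_add_of_commute _ _ (((Commute.refl Θ).smul_left _).smul_right _),
    ← add_smul, neg_add_cancel, zero_smul, exp_zero, one_mulVec]

theorem mul_exp_neg_sub_smul (t s : ℝ) :
    Θ * exp ((-(t - s)) • Θ) = exp ((-t) • Θ) * Θ * exp (s • Θ) := by
  rw [show -(t - s) = -t + s by ring, add_smul,
    exp_add_of_commute _ _ (((Commute.refl Θ).smul_left _).smul_right _), ← mul_assoc,
    (commute_exp_smul Θ _).eq]

/-- The convolution `exp (-t • Θ) c - ∫₀ᵗ Θ exp (-(t - s) • Θ) Y s ds` (`variationOfConstants_eq`),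
with `exp (-t • Θ)` pulled out of the integral so that differentiating it is a product rule. -/
noncomputable def variationOfConstants (c : n → ℝ) (Y : ℝ → n → ℝ) (t : ℝ) : n → ℝ :=
  exp ((-t) • Θ) *ᵥ (c - Θ *ᵥ ∫ s in (0 : ℝ)..t, exp (s • Θ) *ᵥ Y s)

variable {Θ} (c : n → ℝ) {Y : ℝ → n → ℝ}

@[simp]
theorem variationOfConstants_zero : variationOfConstants Θ c Y 0 = c := by
  simp [variationOfConstants]

theorem variationOfConstants_eq {t : ℝ} (hY : ContinuousOn Y (Set.uIcc 0 t)) :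
    variationOfConstants Θ c Y t
      = exp ((-t) • Θ) *ᵥ c - ∫ s in (0 : ℝ)..t, (Θ * exp ((-(t - s)) • Θ)) *ᵥ Y s := by
  have hint : IntervalIntegrable (fun s => exp (s • Θ) *ᵥ Y s) MeasureTheory.volume 0 t :=
    ((continuous_fst.matrix_mulVec continuous_snd).comp_continuousOn
      ((continuous_exp_smul Θ).continuousOn.prodMk hY)).intervalIntegrable
  have e : ∀ s, (Θ * exp ((-(t - s)) • Θ)) *ᵥ Y s
      = (exp ((-t) • Θ) * Θ) *ᵥ (exp (s • Θ) *ᵥ Y s) := fun s => by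
    rw [mul_exp_neg_sub_smul Θ t, mulVec_mulVec]
  simp_rw [e, intervalIntegral_mulVec _ hint, variationOfConstants, mulVec_sub, mulVec_mulVec]

theorem hasDerivAt_variationOfConstants (hY : Continuous Y) (t : ℝ) :
    HasDerivAt (variationOfConstants Θ c Y) (-(Θ *ᵥ (variationOfConstants Θ c Y t + Y t))) t := by
  have hA := (((continuous_exp_smul Θ).matrix_mulVec hY).integral_hasStrictDerivAt 0 t).hasDerivAt
  have h := hasDerivAt_exp_neg_smul_mulVec Θ ((hA.const_mulVec Θ).const_sub c)
  have hcancel : exp ((-t) • Θ) *ᵥ (Θ *ᵥ (exp (t • Θ) *ᵥ Y t)) = Θ *ᵥ Y t := by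
    rw [mulVec_mulVec, ← (commute_exp_smul Θ _).eq, ← mulVec_mulVec,
      exp_neg_smul_mulVec_exp_smul_mulVec]
  rwa [mulVec_neg, hcancel, ← neg_add, ← mulVec_add] at h

theorem continuous_variationOfConstants (hY : Continuous Y) :
    Continuous (variationOfConstants Θ c Y) :=
  continuous_iff_continuousAt.2 fun t => (hasDerivAt_variationOfConstants c hY t).continuousAt

theorem integral_variationOfConstants (hY : Continuous Y) (t : ℝ) :
    ∫ s in (0 : ℝ)..t, -(Θ *ᵥ (variationOfConstants Θ c Y s + Y s))
      = variationOfConstants Θ c Y t - c := by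
  rw [integral_eq_sub_of_hasDerivAt (fun s _ => hasDerivAt_variationOfConstants c hY s)
    ((continuous_const.matrix_mulVec
      ((continuous_variationOfConstants c hY).add hY)).neg.intervalIntegrable 0 t),
    variationOfConstants_zero]

end Matrix

theorem stmt_2_general (d : ℕ) (Θ σ : Matrix (Fin d) (Fin d) ℝ) (b r₀ : Fin d → ℝ)
    (X : ℝ → Fin d → ℝ) (hXcont : ContinuousOn X (Set.Ici 0)) (hX0 : X 0 = 0)
    (r : ℝ → Fin d → ℝ)
    (hr : ∀ t : ℝ, 0 ≤ t →
      r t = (NormedSpace.exp ((-t) • Θ)).mulVec (r₀ - b) + b + σ.mulVec (X t)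
        - ∫ s in (0:ℝ)..t, (Θ * NormedSpace.exp ((-(t - s)) • Θ)).mulVec (σ.mulVec (X s))) :
    ContinuousOn r (Set.Ici 0) ∧ r 0 = r₀ ∧
      ∀ t : ℝ, 0 ≤ t →
        r t = r₀ + (∫ s in (0:ℝ)..t, Θ.mulVec (b - r s)) + σ.mulVec (X t) := by
  set Y : ℝ → Fin d → ℝ := fun s => σ *ᵥ X (max s 0)
  have hY : Continuous Y := continuous_const.matrix_mulVec
    (hXcont.comp_continuous (continuous_id.max continuous_const) fun s => le_max_right s 0)
  have hYX : ∀ s, 0 ≤ s → Y s = σ *ᵥ X s := fun s hs => by simp only [Y, max_eq_left hs]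
  have hrh : ∀ t, 0 ≤ t → r t = variationOfConstants Θ (r₀ - b) Y t + b + Y t := by
    intro t ht
    have hconv : ∫ s in (0 : ℝ)..t, (Θ * exp ((-(t - s)) • Θ)) *ᵥ (σ *ᵥ X s)
        = ∫ s in (0 : ℝ)..t, (Θ * exp ((-(t - s)) • Θ)) *ᵥ Y s :=
      integral_congr fun s hs => by rw [hYX s (Set.uIcc_of_le ht ▸ hs).1]
    rw [hr t ht, variationOfConstants_eq _ hY.continuousOn, hYX t ht, hconv]
    abel
  refine ⟨(((continuous_variationOfConstants _ hY).add continuous_const).add hY).continuousOn.congr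
    hrh, ?_, fun t ht => ?_⟩
  · rw [hrh 0 le_rfl, hYX 0 le_rfl, hX0, mulVec_zero, variationOfConstants_zero]
    abel
  have hdrift : ∫ s in (0 : ℝ)..t, Θ *ᵥ (b - r s)
      = variationOfConstants Θ (r₀ - b) Y t - (r₀ - b) := by
    rw [← integral_variationOfConstants _ hY t]
    refine integral_congr fun s hs => ?_
    rw [hrh s (Set.uIcc_of_le ht ▸ hs).1, ← mulVec_neg]
    congr 1
    abel
  rw [hdrift, hrh t ht, hYX t ht]
  abel

/-- (Lemma 5.2 of the paper, pathwise form.) The variation-of-constants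
formula `r t = exp(−tΘ)(r₀ − b) + b + σ X t − ∫₀ᵗ Θ exp(−(t−s)Θ) σ X s ds` defines a continuous
solution of the generalized Vasicek equation `r t = r₀ + ∫₀ᵗ Θ(b − r s) ds + σ X t` with
initial value `r₀`. -/
theorem stmt_2 (d : ℕ) (hd : 1 ≤ d) (Θ σ : Matrix (Fin d) (Fin d) ℝ) (b r₀ : Fin d → ℝ)
    (X : ℝ → Fin d → ℝ) (hXcont : ContinuousOn X (Set.Ici 0)) (hX0 : X 0 = 0)
    (r : ℝ → Fin d → ℝ)
    (hr : ∀ t : ℝ, 0 ≤ t →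
      r t = (NormedSpace.exp ((-t) • Θ)).mulVec (r₀ - b) + b + σ.mulVec (X t)
        - ∫ s in (0:ℝ)..t, (Θ * NormedSpace.exp ((-(t - s)) • Θ)).mulVec (σ.mulVec (X s))) :
    ContinuousOn r (Set.Ici 0) ∧ r 0 = r₀ ∧
      ∀ t : ℝ, 0 ≤ t →
        r t = r₀ + (∫ s in (0:ℝ)..t, Θ.mulVec (b - r s)) + σ.mulVec (X t) :=
  stmt_2_general d Θ σ b r₀ X hXcont hX0 r hr
end

section
/- Let (Ω, F, P) be a probability space and U : [0,∞) × Ω → ℝ^d a jointly measurable process such that each U_v is square-integrable, almost every sample path is locally Bochner integrable, and there is a measurable function γ : ℝ → ℝ^{d×d} whose norm is locally integrable such that E[U_v U_sᵀ] = γ(v − s) for all v, s ≥ 0. Then for every T > 0, the matrix M_T := E[((1/T)∫₀ᵀ U_v dv)·((1/T)∫₀ᵀ U_v dv)ᵀ] satisfies ‖M_T‖ ≤ (2/T)∫₀ᵀ ‖γ(v)‖ dv, where ‖·‖ is the operator norm induced by the Euclidean norm on ℝ^d. -/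
/-!
Expanding the outer product of the time averages and exchanging expectation with the double time
integral gives `T² M_T = ∫∫_{(0,T]²} γ(v - s) dv ds`; Fubini applies because
`E‖U_v U_sᵀ‖ ≤ (E‖U_v‖² + E‖U_s‖²) / 2 = tr γ(0)` uniformly in `v, s`. Stationarity gives
`γ(-u) = γ(u)ᵀ`, so `‖γ‖` is even, and for `v ∈ (0,T]` the inner integral `∫₀ᵀ ‖γ(v - s)‖ ds` is at
most `∫_{-T}^{T} ‖γ‖ = 2 ∫₀ᵀ ‖γ‖`.
-/

open MeasureTheory Matrix Filter intervalIntegral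
open scoped Matrix.Norms.L2Operator

/-- The rank-one matrix `x yᵀ` built from two vectors of `ℝ^d`. -/
noncomputable def outer {d : ℕ} (x y : EuclideanSpace ℝ (Fin d)) : Matrix (Fin d) (Fin d) ℝ :=
  Matrix.vecMulVec (EuclideanSpace.equiv (Fin d) ℝ x) (EuclideanSpace.equiv (Fin d) ℝ y)

variable {d : ℕ}

lemma transpose_outer (x y : EuclideanSpace ℝ (Fin d)) : (outer x y)ᵀ = outer y x :=
  transpose_vecMulVec _ _

lemma trace_outer_self (x : EuclideanSpace ℝ (Fin d)) : (outer x x).trace = ‖x‖ ^ 2 := by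
  rw [EuclideanSpace.norm_sq_eq]
  simp [outer, trace_vecMulVec, dotProduct, sq]

lemma toEuclideanCLM_outer (x y : EuclideanSpace ℝ (Fin d)) :
    toEuclideanCLM (𝕜 := ℝ) (outer x y) = InnerProductSpace.rankOne ℝ x y := by
  ext z i
  simp [outer, mulVec, dotProduct, PiLp.inner_apply, vecMulVec_apply, Finset.sum_mul]
  exact Finset.sum_congr rfl fun j _ => by ring

lemma norm_outer (x y : EuclideanSpace ℝ (Fin d)) : ‖outer x y‖ = ‖x‖ * ‖y‖ := by
  rw [← l2_opNorm_toEuclideanCLM, toEuclideanCLM_outer, InnerProductSpace.norm_rankOne]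

lemma norm_outer_le_half_add_sq (x y : EuclideanSpace ℝ (Fin d)) :
    ‖outer x y‖ ≤ (‖x‖ ^ 2 + ‖y‖ ^ 2) / 2 := by
  rw [norm_outer]
  nlinarith [sq_nonneg (‖x‖ - ‖y‖)]

noncomputable def outerCLM (d : ℕ) :
    EuclideanSpace ℝ (Fin d) →L[ℝ] EuclideanSpace ℝ (Fin d) →L[ℝ] Matrix (Fin d) (Fin d) ℝ :=
  ((vecMulVecBilin ℝ ℝ).compl₁₂ (EuclideanSpace.equiv (Fin d) ℝ).toLinearMap
    (EuclideanSpace.equiv (Fin d) ℝ).toLinearMap).toContinuousBilinearMap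

@[simp] lemma outerCLM_apply (x y : EuclideanSpace ℝ (Fin d)) : outerCLM d x y = outer x y := rfl

lemma l2_opNorm_transpose {n : Type*} [Fintype n] [DecidableEq n] (A : Matrix n n ℝ) :
    ‖Aᵀ‖ = ‖A‖ := by
  rw [← conjTranspose_eq_transpose_of_trivial, l2_opNorm_conjTranspose]

section SecondMoment

variable {Ω : Type*} [MeasurableSpace Ω] {P : Measure Ω}

lemma integral_transpose {n : Type*} [Fintype n] [DecidableEq n] (f : Ω → Matrix n n ℝ) :
    ∫ ω, (f ω)ᵀ ∂P = (∫ ω, f ω ∂P)ᵀ :=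
  (transposeLinearEquiv n n ℝ ℝ).toContinuousLinearEquiv.integral_comp_comm f

variable {X Y : Ω → EuclideanSpace ℝ (Fin d)}

lemma integrable_outer (hX : MemLp X 2 P) (hY : MemLp Y 2 P) :
    Integrable (fun ω => outer (X ω) (Y ω)) P :=
  ((hX.norm.integrable_sq.add hY.norm.integrable_sq).div_const 2).mono'
    ((outerCLM d).aestronglyMeasurable_comp₂ hX.1 hY.1)
    (ae_of_all _ fun _ => norm_outer_le_half_add_sq _ _)

lemma integral_norm_outer_le (hX : MemLp X 2 P) (hY : MemLp Y 2 P) :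
    ∫ ω, ‖outer (X ω) (Y ω)‖ ∂P ≤ ((∫ ω, ‖X ω‖ ^ 2 ∂P) + ∫ ω, ‖Y ω‖ ^ 2 ∂P) / 2 := by
  rw [← integral_add hX.norm.integrable_sq hY.norm.integrable_sq, ← MeasureTheory.integral_div]
  exact integral_mono (integrable_outer hX hY).norm
    ((hX.norm.integrable_sq.add hY.norm.integrable_sq).div_const 2)
    fun _ => norm_outer_le_half_add_sq _ _

lemma integral_norm_sq_eq_trace (hX : MemLp X 2 P) :
    ∫ ω, ‖X ω‖ ^ 2 ∂P = (∫ ω, outer (X ω) (X ω) ∂P).trace := by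
  simp_rw [← trace_outer_self]
  exact (traceLinearMap (Fin d) ℝ ℝ).toContinuousLinearMap.integral_comp_comm
    (integrable_outer hX hX)

end SecondMoment

lemma integrable_prod_of_integral_norm_le {α β E : Type*} [MeasurableSpace α] [MeasurableSpace β]
    [NormedAddCommGroup E] {μ : Measure α} {ν : Measure β} [IsFiniteMeasure μ] [SFinite ν]
    {F : α × β → E} (C : ℝ) (hF : AEStronglyMeasurable F (μ.prod ν))
    (h : ∀ᵐ x ∂μ, Integrable (fun y => F (x, y)) ν ∧ ∫ y, ‖F (x, y)‖ ∂ν ≤ C) :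
    Integrable F (μ.prod ν) := by
  refine (integrable_prod_iff hF).2 ⟨h.mono fun _ hx => hx.1, ?_⟩
  refine (integrable_const C).mono' hF.norm.integral_prod_right' (h.mono fun x hx => ?_)
  rw [Real.norm_of_nonneg (integral_nonneg fun _ => norm_nonneg _)]
  exact hx.2

section StationaryCovariance

variable {Ω : Type*} [MeasurableSpace Ω] {P : Measure Ω} {U : ℝ → Ω → EuclideanSpace ℝ (Fin d)}
  {γ : ℝ → Matrix (Fin d) (Fin d) ℝ}

lemma covariance_neg
    (hcov : ∀ v s : ℝ, 0 ≤ v → 0 ≤ s → ∫ ω, outer (U v ω) (U s ω) ∂P = γ (v - s)) (u : ℝ) :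
    γ (-u) = (γ u)ᵀ := by
  have hu : max u 0 - max (-u) 0 = u := max_zero_sub_eq_self u
  have hv : (0 : ℝ) ≤ max u 0 := le_max_right _ _
  have hs : (0 : ℝ) ≤ max (-u) 0 := le_max_right _ _
  rw [← hu, neg_sub, ← hcov _ _ hs hv, ← hcov _ _ hv hs, ← integral_transpose]
  simp_rw [transpose_outer]

lemma norm_covariance_neg
    (hcov : ∀ v s : ℝ, 0 ≤ v → 0 ≤ s → ∫ ω, outer (U v ω) (U s ω) ∂P = γ (v - s)) (u : ℝ) :
    ‖γ (-u)‖ = ‖γ u‖ := by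
  rw [covariance_neg hcov, l2_opNorm_transpose]

lemma integral_norm_outer_le_trace (hUL2 : ∀ v : ℝ, 0 ≤ v → MemLp (U v) 2 P)
    (hcov : ∀ v s : ℝ, 0 ≤ v → 0 ≤ s → ∫ ω, outer (U v ω) (U s ω) ∂P = γ (v - s))
    {v s : ℝ} (hv : 0 ≤ v) (hs : 0 ≤ s) :
    ∫ ω, ‖outer (U v ω) (U s ω)‖ ∂P ≤ (γ 0).trace := by
  have hsecond : ∀ t, 0 ≤ t → ∫ ω, ‖U t ω‖ ^ 2 ∂P = (γ 0).trace := fun t ht => by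
    rw [integral_norm_sq_eq_trace (hUL2 t ht), hcov t t ht ht, sub_self]
  calc ∫ ω, ‖outer (U v ω) (U s ω)‖ ∂P
      ≤ ((∫ ω, ‖U v ω‖ ^ 2 ∂P) + ∫ ω, ‖U s ω‖ ^ 2 ∂P) / 2 :=
        integral_norm_outer_le (hUL2 v hv) (hUL2 s hs)
    _ = (γ 0).trace := by rw [hsecond v hv, hsecond s hs]; ring

lemma integrable_outer_prod [SFinite P] (hUmeas : Measurable (fun p : ℝ × Ω => U p.1 p.2))
    (hUL2 : ∀ v : ℝ, 0 ≤ v → MemLp (U v) 2 P)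
    (hcov : ∀ v s : ℝ, 0 ≤ v → 0 ≤ s → ∫ ω, outer (U v ω) (U s ω) ∂P = γ (v - s))
    {μ : Measure ℝ} [IsFiniteMeasure μ] (hμ : ∀ᵐ v ∂μ, 0 ≤ v) :
    Integrable (fun q : (ℝ × ℝ) × Ω => outer (U q.1.1 q.2) (U q.1.2 q.2)) ((μ.prod μ).prod P) := by
  refine integrable_prod_of_integral_norm_le (γ 0).trace
    ((outerCLM d).aestronglyMeasurable_comp₂
      (hUmeas.comp (f := fun q : (ℝ × ℝ) × Ω => (q.1.1, q.2)) (by fun_prop)).aestronglyMeasurable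
      (hUmeas.comp (f := fun q : (ℝ × ℝ) × Ω => (q.1.2, q.2)) (by fun_prop)).aestronglyMeasurable)
    ?_
  filter_upwards [Measure.quasiMeasurePreserving_fst.ae hμ,
    Measure.quasiMeasurePreserving_snd.ae hμ] with p hv hs
  exact ⟨integrable_outer (hUL2 _ hv) (hUL2 _ hs), integral_norm_outer_le_trace hUL2 hcov hv hs⟩

lemma integral_outer_integral [SFinite P] (hUmeas : Measurable (fun p : ℝ × Ω => U p.1 p.2))
    (hUL2 : ∀ v : ℝ, 0 ≤ v → MemLp (U v) 2 P)
    (hcov : ∀ v s : ℝ, 0 ≤ v → 0 ≤ s → ∫ ω, outer (U v ω) (U s ω) ∂P = γ (v - s))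
    {μ : Measure ℝ} [IsFiniteMeasure μ] (hμ : ∀ᵐ v ∂μ, 0 ≤ v)
    (hpaths : ∀ᵐ ω ∂P, Integrable (fun v => U v ω) μ) :
    ∫ ω, outer (∫ v, U v ω ∂μ) (∫ v, U v ω ∂μ) ∂P = ∫ p, γ (p.1 - p.2) ∂(μ.prod μ) := by
  calc ∫ ω, outer (∫ v, U v ω ∂μ) (∫ v, U v ω ∂μ) ∂P
      = ∫ ω, ∫ p, outer (U p.1 ω) (U p.2 ω) ∂(μ.prod μ) ∂P :=
        integral_congr_ae <| hpaths.mono fun ω hω => (integral_prod_bilin (outerCLM d) hω hω).symm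
    _ = ∫ p, ∫ ω, outer (U p.1 ω) (U p.2 ω) ∂P ∂(μ.prod μ) :=
        (integral_integral_swap (integrable_outer_prod hUmeas hUL2 hcov hμ)).symm
    _ = ∫ p, γ (p.1 - p.2) ∂(μ.prod μ) := by
        refine integral_congr_ae ?_
        filter_upwards [Measure.quasiMeasurePreserving_fst.ae hμ,
          Measure.quasiMeasurePreserving_snd.ae hμ] with p hv hs
        exact hcov _ _ hv hs

end StationaryCovariance

section DifferenceKernel

variable {g : ℝ → ℝ} {T : ℝ}

lemma integral_comp_sub_le_integral_neg_self (hg : 0 ≤ g)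
    (hint : IntervalIntegrable g volume (-T) T) {v : ℝ} (hv : v ∈ Set.Icc 0 T) :
    ∫ s in (0 : ℝ)..T, g (v - s) ≤ ∫ u in (-T)..T, g u := by
  rw [intervalIntegral.integral_comp_sub_left g v, sub_zero]
  exact intervalIntegral.integral_mono_interval (by linarith [hv.1]) (by linarith [hv.1, hv.2]) hv.2
    (ae_of_all _ fun u => hg u) hint

lemma integral_prod_comp_sub_le (hgm : Measurable g) (hg : 0 ≤ g) (hgi : LocallyIntegrable g)
    (hT : 0 ≤ T) :
    ∫ p, g (p.1 - p.2) ∂((volume.restrict (Set.Ioc 0 T)).prod (volume.restrict (Set.Ioc 0 T)))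
      ≤ T * ∫ u in (-T)..T, g u := by
  set μ := volume.restrict (Set.Ioc (0 : ℝ) T)
  have hint : ∀ a b, IntervalIntegrable g volume a b := fun a b =>
    (hgi.integrableOn_isCompact isCompact_uIcc).intervalIntegrable
  have hsection : ∀ v ∈ Set.Ioc 0 T,
      Integrable (fun s => g (v - s)) μ ∧ ∫ s, ‖g (v - s)‖ ∂μ ≤ ∫ u in (-T)..T, g u := by
    intro v hv
    have hsec : IntervalIntegrable (fun s => g (v - s)) volume 0 T := by
      simpa using ((hint (v - T) v).comp_sub_left v).symm
    refine ⟨hsec.1, ?_⟩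
    calc ∫ s, ‖g (v - s)‖ ∂μ = ∫ s in (0 : ℝ)..T, g (v - s) := by
          simp_rw [fun x => Real.norm_of_nonneg (hg x)]
          exact (intervalIntegral.integral_of_le hT).symm
      _ ≤ ∫ u in (-T)..T, g u :=
          integral_comp_sub_le_integral_neg_self hg (hint _ _) (Set.Ioc_subset_Icc_self hv)
  have hprod : Integrable (fun p : ℝ × ℝ => g (p.1 - p.2)) (μ.prod μ) :=
    integrable_prod_of_integral_norm_le _
      (hgm.comp (measurable_fst.sub measurable_snd)).aestronglyMeasurable
      ((ae_restrict_mem measurableSet_Ioc).mono hsection)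
  calc ∫ p, g (p.1 - p.2) ∂(μ.prod μ) = ∫ v, ∫ s, g (v - s) ∂μ ∂μ := integral_prod _ hprod
    _ ≤ ∫ _, (∫ u in (-T)..T, g u) ∂μ := by
        refine integral_mono_ae hprod.integral_prod_left (integrable_const _) ?_
        filter_upwards [ae_restrict_mem measurableSet_Ioc] with v hv
        simpa [fun x => Real.norm_of_nonneg (hg x)] using (hsection v hv).2
    _ = T * ∫ u in (-T)..T, g u := by simp [μ, hT]

lemma integral_neg_self_eq_two_mul_of_even (hg : Function.Even g)
    (hint : IntervalIntegrable g volume (-T) T) :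
    ∫ u in (-T)..T, g u = 2 * ∫ u in (0 : ℝ)..T, g u := by
  have hzero : (0 : ℝ) ∈ Set.uIcc (-T) T := by
    simpa [Set.mem_uIcc] using le_total 0 T
  have hneg : ∫ u in (-T)..0, g u = ∫ u in (0 : ℝ)..T, g u := by
    simpa [hg _] using (intervalIntegral.integral_comp_neg (a := 0) (b := T) g).symm
  rw [← intervalIntegral.integral_add_adjacent_intervals (b := 0)
    (hint.mono_set (Set.uIcc_subset_uIcc_left hzero))
    (hint.mono_set (Set.uIcc_subset_uIcc_right hzero)), hneg]
  ring

end DifferenceKernel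

/-- For a jointly measurable, square-integrable process `U` with wide-sense
stationary covariance `E[U_v U_sᵀ] = γ(v−s)` and locally integrable `‖γ‖`, the second-moment
matrix `M_T` of the time average `(1/T)∫₀ᵀ U_v dv` satisfies
`‖M_T‖ ≤ (2/T)∫₀ᵀ ‖γ(v)‖ dv`, with `‖·‖` the operator norm induced by the Euclidean norm. -/
theorem stmt_7 {Ω : Type*} [MeasurableSpace Ω] (P : Measure Ω) [IsProbabilityMeasure P]
    (d : ℕ) (U : ℝ → Ω → EuclideanSpace ℝ (Fin d))
    (hUmeas : Measurable (fun p : ℝ × Ω => U p.1 p.2))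
    (hUL2 : ∀ v : ℝ, 0 ≤ v → MemLp (U v) 2 P)
    (hUpaths : ∀ᵐ ω ∂P, ∀ T : ℝ, 0 ≤ T →
      IntegrableOn (fun v => U v ω) (Set.Icc 0 T) volume)
    (γ : ℝ → Matrix (Fin d) (Fin d) ℝ) (hγmeas : StronglyMeasurable γ)
    (hγloc : LocallyIntegrable (fun v => ‖γ v‖) volume)
    (hcov : ∀ v s : ℝ, 0 ≤ v → 0 ≤ s →
      (∫ ω, outer (U v ω) (U s ω) ∂P) = γ (v - s)) :
    ∀ T : ℝ, 0 < T →
      ‖∫ ω, outer ((1 / T) • ∫ v in (0:ℝ)..T, U v ω)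
          ((1 / T) • ∫ v in (0:ℝ)..T, U v ω) ∂P‖
        ≤ (2 / T) * ∫ v in (0:ℝ)..T, ‖γ v‖ := by
  intro T hT
  set μ := volume.restrict (Set.Ioc (0 : ℝ) T)
  have hpaths : ∀ᵐ ω ∂P, Integrable (fun v => U v ω) μ :=
    hUpaths.mono fun ω hω => (hω T hT.le).mono_set Set.Ioc_subset_Icc_self
  have hmoment : ∫ ω, outer ((1 / T) • ∫ v in (0:ℝ)..T, U v ω)
        ((1 / T) • ∫ v in (0:ℝ)..T, U v ω) ∂P = (1 / T) ^ 2 • ∫ p, γ (p.1 - p.2) ∂(μ.prod μ) := by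
    simp_rw [← outerCLM_apply, map_smul, _root_.smul_apply, smul_smul, outerCLM_apply,
      intervalIntegral.integral_of_le hT.le]
    rw [MeasureTheory.integral_smul, integral_outer_integral hUmeas hUL2 hcov
      (ae_restrict_of_forall_mem measurableSet_Ioc fun v hv => hv.1.le) hpaths, sq]
  have heven : Function.Even fun u => ‖γ u‖ := norm_covariance_neg hcov
  have hint : IntervalIntegrable (fun u => ‖γ u‖) volume (-T) T :=
    (hγloc.integrableOn_isCompact isCompact_uIcc).intervalIntegrable
  calc _ = (1 / T) ^ 2 * ‖∫ p, γ (p.1 - p.2) ∂(μ.prod μ)‖ := by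
        rw [hmoment, norm_smul, Real.norm_of_nonneg (by positivity)]
    _ ≤ (1 / T) ^ 2 * (T * ∫ u in (-T)..T, ‖γ u‖) := by
        gcongr
        exact (MeasureTheory.norm_integral_le_integral_norm _).trans (integral_prod_comp_sub_le
          hγmeas.norm.measurable (fun _ => norm_nonneg _) hγloc hT.le)
    _ = (2 / T) * ∫ v in (0:ℝ)..T, ‖γ v‖ := by
        rw [integral_neg_self_eq_two_mul_of_even heven hint]
        field_simp
end
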